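/- arXiv:2203.09190 — 2 statements merged into one kernel-verified Lean document; each statement's English description precedes it below -/
import Mathlib

section
/- Lemma II: Assume the radial network encoding with parameters r, x, g, b : Fin n → ℝ entrywise nonnegative, net consumptions p, q : Fin n → ℝ, slack squared voltage v₀ > 0, and limits v^min, v^max, I^max : Fin n → ℝ. Assume the matrix A := 1 − Gᵀ + M₁ + M₂ is invertible (condition (8.a)) and every entry of D is nonnegative (condition (8.b)), where M₁ := 2·diag(r)·H·diag(g), M₂ := 2·diag(x)·H·diag(b), C := A⁻¹, and D := 2·C·diag(r)·(H − 1)·diag(r) + 2·C·diag(x)·(H − 1)·diag(x) + C·diag(fun l => (r l)^2 + (x l)^2). Suppose (P, Q, v, f) with v l > 0 satisfies the exact DistFlow equations (1.a)–(1.c), and suppose there exist auxiliary variables (P̂, Q̂, v̂, P̲, Q̲, P̄, Q̄, f̄) satisfying the lossless equations (3.a)–(3.b), the bound equations (3.c)–(3.e), and the security bounds v l ≥ v^min l, v̂ l ≤ v^max l, and f̄ l ≤ I^max l for all l. Then the exact solution itself satisfies the original security constraints: v^min l ≤ v l ≤ v^max l and f l ≤ I^max l for all l. -/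
open Matrix

noncomputable section

/-- Adjacency matrix of the radial network: `G k l = 1` iff `up l = some k`. -/
def Gmat {n : ℕ} (up : Fin n → Option (Fin n)) : Matrix (Fin n) (Fin n) ℝ :=
  Matrix.of fun k l => if up l = some k then (1 : ℝ) else 0

/-- Sum of a vector over the children of bus `l`. -/
def csum {n : ℕ} (up : Fin n → Option (Fin n)) (P : Fin n → ℝ) (l : Fin n) : ℝ :=
  ∑ m ∈ Finset.univ.filter (fun m => up m = some l), P m

def Hmat {n : ℕ} (up : Fin n → Option (Fin n)) : Matrix (Fin n) (Fin n) ℝ :=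
  (1 - Gmat up)⁻¹

def M1 {n : ℕ} (up : Fin n → Option (Fin n)) (r g : Fin n → ℝ) :
    Matrix (Fin n) (Fin n) ℝ :=
  (2 : ℝ) • (diagonal r * Hmat up * diagonal g)

def M2 {n : ℕ} (up : Fin n → Option (Fin n)) (x b : Fin n → ℝ) :
    Matrix (Fin n) (Fin n) ℝ :=
  (2 : ℝ) • (diagonal x * Hmat up * diagonal b)

def Amat {n : ℕ} (up : Fin n → Option (Fin n)) (r x g b : Fin n → ℝ) :
    Matrix (Fin n) (Fin n) ℝ :=
  1 - (Gmat up)ᵀ + M1 up r g + M2 up x b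

def Cmat {n : ℕ} (up : Fin n → Option (Fin n)) (r x g b : Fin n → ℝ) :
    Matrix (Fin n) (Fin n) ℝ :=
  (Amat up r x g b)⁻¹

def Dmat {n : ℕ} (up : Fin n → Option (Fin n)) (r x g b : Fin n → ℝ) :
    Matrix (Fin n) (Fin n) ℝ :=
  (2 : ℝ) • (Cmat up r x g b * diagonal r * (Hmat up - 1) * diagonal r)
    + (2 : ℝ) • (Cmat up r x g b * diagonal x * (Hmat up - 1) * diagonal x)
    + Cmat up r x g b * diagonal (fun l => (r l) ^ 2 + (x l) ^ 2)

/-!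
Parents have smaller indices than their children, so `G` is strictly upper triangular and
nilpotent, and `H = 1 + G + ⋯ + G ^ (n - 1)` is entrywise nonnegative with `H - 1` supported
strictly above the diagonal. A flow `W = s + G W` is therefore `H s`, and `W - s` only collects
the injections of the lines downstream.

Currents: the flows `P̲, Q̲` drop the nonnegative losses `r f, x f`, and `P̄, Q̄` replace `f` by
`f̄`; by induction from the leaves, `f ≤ f̄` downstream puts `P - r f` between `P̲` and
`P̄ - r f̄` (likewise for `Q`), so (1.c) and (3.e) give `f v ≤ f̄ v`.

Voltages: subtracting (1.b) from (3.b) and eliminating the flow differences gives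
`A (v̂ - v) = (2 diag r (H - 1) diag r + 2 diag x (H - 1) diag x + diag (r² + x²)) f`,
so `v̂ - v = D f ≥ 0`.
-/

open Finset

namespace Matrix

variable {R : Type*} [Semiring R] {n : ℕ} {N : Matrix (Fin n) (Fin n) R}

theorem pow_apply_eq_zero_of_lt_add (hN : ∀ k l, N k l ≠ 0 → k < l) (m : ℕ) {k l : Fin n}
    (h : (l : ℕ) < k + m) : (N ^ m) k l = 0 := by
  induction m generalizing l with
  | zero => exact one_apply_ne (by omega)
  | succ m ih =>
    rw [pow_succ, mul_apply]
    refine sum_eq_zero fun j _ => ?_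
    by_cases hj : N j l = 0
    · rw [hj, mul_zero]
    · have hjl := Fin.lt_def.mp (hN j l hj)
      rw [ih (by omega), zero_mul]

theorem pow_card_eq_zero (hN : ∀ k l, N k l ≠ 0 → k < l) : N ^ n = 0 := by
  ext k l
  exact pow_apply_eq_zero_of_lt_add hN n (by omega)

theorem diagonal_mulVec_eq_mul {α ι : Type*} [NonUnitalNonAssocSemiring α] [Fintype ι]
    [DecidableEq ι] (d w : ι → α) :
    diagonal d *ᵥ w = d * w :=
  funext (mulVec_diagonal d w)

end Matrix

theorem sq_le_max_sq {α : Type*} [Ring α] [LinearOrder α] [IsStrictOrderedRing α] {a t c : α}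
    (hat : a ≤ t) (htc : t ≤ c) : t ^ 2 ≤ max (c ^ 2) (a ^ 2) := by
  rcases le_total 0 t with h | h
  · exact le_max_of_le_left (pow_le_pow_left₀ h htc 2)
  · have hta : t ≤ -a := le_neg.mp (hat.trans (h.trans (neg_nonneg.mpr h)))
    exact le_max_of_le_right (neg_sq a ▸ sq_le_sq' (by rwa [neg_neg]) hta)

section RadialNetwork

variable {n : ℕ} {up : Fin n → Option (Fin n)}

theorem Gmat_apply_nonneg (k l : Fin n) : 0 ≤ Gmat up k l := by
  simp only [Gmat, of_apply]; split_ifs <;> simp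

theorem lt_of_Gmat_apply_ne_zero (hup : ∀ l k, up l = some k → (k : ℕ) < (l : ℕ))
    (k l : Fin n) (h : Gmat up k l ≠ 0) : k < l := by
  by_cases hlk : up l = some k
  · exact hup l k hlk
  · simp [Gmat, hlk] at h

theorem csum_eq_mulVec (P : Fin n → ℝ) : csum up P = Gmat up *ᵥ P := by
  ext l
  simp [csum, sum_filter, mulVec, dotProduct, Gmat, ite_mul]

theorem csum_sub (X Y : Fin n → ℝ) (l : Fin n) :
    csum up (X - Y) l = csum up X l - csum up Y l := by
  simp [csum, sum_sub_distrib]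

theorem elim_sub_elim_eq_transpose_mulVec (v₀ : ℝ) (w v : Fin n → ℝ) (l : Fin n) :
    (up l).elim v₀ w - (up l).elim v₀ v = ((Gmat up)ᵀ *ᵥ (w - v)) l := by
  cases h : up l <;> simp [mulVec, dotProduct, Gmat, h]

theorem geom_sum_Gmat_mul_one_sub (hup : ∀ l k, up l = some k → (k : ℕ) < (l : ℕ)) :
    (∑ i ∈ range n, Gmat up ^ i) * (1 - Gmat up) = 1 := by
  rw [geom_sum_mul_neg, pow_card_eq_zero (lt_of_Gmat_apply_ne_zero hup), sub_zero]

theorem Hmat_eq_sum (hup : ∀ l k, up l = some k → (k : ℕ) < (l : ℕ)) :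
    Hmat up = ∑ i ∈ range n, Gmat up ^ i :=
  inv_eq_left_inv (geom_sum_Gmat_mul_one_sub hup)

theorem Hmat_mul_one_sub (hup : ∀ l k, up l = some k → (k : ℕ) < (l : ℕ)) :
    Hmat up * (1 - Gmat up) = 1 := by
  rw [Hmat_eq_sum hup]
  exact geom_sum_Gmat_mul_one_sub hup

theorem Hmat_sub_one_eq_sum (hup : ∀ l k, up l = some k → (k : ℕ) < (l : ℕ)) :
    Hmat up - 1 = ∑ i ∈ range n, Gmat up ^ (i + 1) := by
  rw [Hmat_eq_sum hup, ← add_zero (∑ i ∈ range n, _),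
    ← pow_card_eq_zero (lt_of_Gmat_apply_ne_zero hup), ← sum_range_succ, sum_range_succ',
    pow_zero, add_sub_cancel_right]

theorem Hmat_sub_one_apply_nonneg (hup : ∀ l k, up l = some k → (k : ℕ) < (l : ℕ))
    (k l : Fin n) : 0 ≤ (Hmat up - 1) k l := by
  rw [Hmat_sub_one_eq_sum hup, Matrix.sum_apply]
  exact sum_nonneg fun i _ => pow_apply_nonneg Gmat_apply_nonneg (i + 1) k l

theorem Hmat_sub_one_apply_eq_zero_of_le (hup : ∀ l k, up l = some k → (k : ℕ) < (l : ℕ))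
    {k l : Fin n} (h : l ≤ k) : (Hmat up - 1) k l = 0 := by
  rw [Hmat_sub_one_eq_sum hup, Matrix.sum_apply]
  rw [Fin.le_def] at h
  exact sum_eq_zero fun i _ =>
    pow_apply_eq_zero_of_lt_add (lt_of_Gmat_apply_ne_zero hup) (i + 1) (by omega)

theorem eq_Hmat_mulVec_of_eq_add_csum (hup : ∀ l k, up l = some k → (k : ℕ) < (l : ℕ))
    {W s : Fin n → ℝ} (h : ∀ l, W l = s l + csum up W l) :
    W = Hmat up *ᵥ s := by
  have hW : (1 - Gmat up) *ᵥ W = s := by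
    ext l
    rw [sub_mulVec, one_mulVec, ← csum_eq_mulVec, Pi.sub_apply, h l, add_sub_cancel_right]
  rw [← hW, mulVec_mulVec, Hmat_mul_one_sub hup, one_mulVec]

theorem le_of_eq_add_csum (hup : ∀ l k, up l = some k → (k : ℕ) < (l : ℕ))
    {W s : Fin n → ℝ} (h : ∀ l, W l = s l + csum up W l) {l : Fin n}
    (hs : ∀ m, l < m → 0 ≤ s m) : s l ≤ W l := by
  have hW : W l - s l = ((Hmat up - 1) *ᵥ s) l := by
    rw [sub_mulVec, one_mulVec, ← eq_Hmat_mulVec_of_eq_add_csum hup h, Pi.sub_apply]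
  have hsum : 0 ≤ ∑ m, (Hmat up - 1) l m * s m := sum_nonneg fun m _ => by
    rcases le_or_gt m l with hml | hlm
    · rw [Hmat_sub_one_apply_eq_zero_of_le hup hml, zero_mul]
    · exact mul_nonneg (Hmat_sub_one_apply_nonneg hup l m) (hs m hlm)
  exact sub_nonneg.mp (hW ▸ hsum)

end RadialNetwork

section DistFlow

variable {n : ℕ} {up : Fin n → Option (Fin n)} {r x g b p q P Q v f : Fin n → ℝ}

theorem current_le_bound (hup : ∀ l k, up l = some k → (k : ℕ) < (l : ℕ))
    (hr : ∀ l, 0 ≤ r l) (hx : ∀ l, 0 ≤ x l) (hv : ∀ l, 0 < v l) (hf : ∀ l, 0 ≤ f l)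
    (h1aP : ∀ l, P l = p l + g l * v l + r l * f l + csum up P l)
    (h1aQ : ∀ l, Q l = q l + b l * v l + x l * f l + csum up Q l)
    (h1c : ∀ l, f l * v l = (P l - r l * f l) ^ 2 + (Q l - x l * f l) ^ 2)
    {Pl Ql Pb Qb fb : Fin n → ℝ}
    (h3cP : ∀ l, Pl l = p l + g l * v l + csum up Pl l)
    (h3cQ : ∀ l, Ql l = q l + b l * v l + csum up Ql l)
    (h3dP : ∀ l, Pb l = p l + g l * v l + r l * fb l + csum up Pb l)
    (h3dQ : ∀ l, Qb l = q l + b l * v l + x l * fb l + csum up Qb l)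
    (h3e : ∀ l, max ((Pb l - r l * fb l) ^ 2) ((Pl l) ^ 2)
        + max ((Qb l - x l * fb l) ^ 2) ((Ql l) ^ 2) ≤ fb l * v l)
    (l : Fin n) : f l ≤ fb l := by
  induction l using WellFoundedGT.induction with
  | _ l ih =>
    have hPl : r l * f l ≤ (P - Pl) l := le_of_eq_add_csum hup (s := r * f)
      (fun m => by
        simp only [csum_sub, Pi.sub_apply, Pi.mul_apply]; linear_combination h1aP m - h3cP m)
      fun m _ => mul_nonneg (hr m) (hf m)
    have hQl : x l * f l ≤ (Q - Ql) l := le_of_eq_add_csum hup (s := x * f)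
      (fun m => by
        simp only [csum_sub, Pi.sub_apply, Pi.mul_apply]; linear_combination h1aQ m - h3cQ m)
      fun m _ => mul_nonneg (hx m) (hf m)
    have hPb : r l * (fb l - f l) ≤ (Pb - P) l := le_of_eq_add_csum hup (s := r * (fb - f))
      (fun m => by
        simp only [csum_sub, Pi.sub_apply, Pi.mul_apply]; linear_combination h3dP m - h1aP m)
      fun m hm => mul_nonneg (hr m) (sub_nonneg.2 (ih m hm))
    have hQb : x l * (fb l - f l) ≤ (Qb - Q) l := le_of_eq_add_csum hup (s := x * (fb - f))
      (fun m => by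
        simp only [csum_sub, Pi.sub_apply, Pi.mul_apply]; linear_combination h3dQ m - h1aQ m)
      fun m hm => mul_nonneg (hx m) (sub_nonneg.2 (ih m hm))
    simp only [Pi.sub_apply] at hPl hQl hPb hQb
    have hfv : f l * v l ≤ fb l * v l := calc
      f l * v l = (P l - r l * f l) ^ 2 + (Q l - x l * f l) ^ 2 := h1c l
      _ ≤ max ((Pb l - r l * fb l) ^ 2) ((Pl l) ^ 2)
          + max ((Qb l - x l * fb l) ^ 2) ((Ql l) ^ 2) :=
        add_le_add (sq_le_max_sq (by linarith) (by linarith))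
          (sq_le_max_sq (by linarith) (by linarith))
      _ ≤ fb l * v l := h3e l
    exact le_of_mul_le_mul_right hfv (hv l)

theorem Dmat_mulVec (u : Fin n → ℝ) :
    Dmat up r x g b *ᵥ u = Cmat up r x g b *ᵥ ((2 : ℝ) • (r * ((Hmat up - 1) *ᵥ (r * u)))
      + (2 : ℝ) • (x * ((Hmat up - 1) *ᵥ (x * u))) + (r ^ 2 + x ^ 2) * u) := by
  simp only [Dmat, add_mulVec, smul_mulVec, ← mulVec_mulVec, diagonal_mulVec_eq_mul, mulVec_add,
    mulVec_smul]
  rfl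

theorem Amat_mulVec_voltage_gap (hup : ∀ l k, up l = some k → (k : ℕ) < (l : ℕ))
    {v₀ : ℝ} (h1aP : ∀ l, P l = p l + g l * v l + r l * f l + csum up P l)
    (h1aQ : ∀ l, Q l = q l + b l * v l + x l * f l + csum up Q l)
    (h1b : ∀ l, v l = (up l).elim v₀ v - 2 * (r l * P l + x l * Q l)
        + ((r l) ^ 2 + (x l) ^ 2) * f l)
    {Phat Qhat vhat : Fin n → ℝ}
    (h3aP : ∀ l, Phat l = p l + g l * vhat l + csum up Phat l)
    (h3aQ : ∀ l, Qhat l = q l + b l * vhat l + csum up Qhat l)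
    (h3b : ∀ l, vhat l = (up l).elim v₀ vhat - 2 * (r l * Phat l + x l * Qhat l)) :
    Amat up r x g b *ᵥ (vhat - v) = (2 : ℝ) • (r * ((Hmat up - 1) *ᵥ (r * f)))
      + (2 : ℝ) • (x * ((Hmat up - 1) *ᵥ (x * f))) + (r ^ 2 + x ^ 2) * f := by
  have hP : Phat - P = Hmat up *ᵥ (g * (vhat - v) - r * f) :=
    eq_Hmat_mulVec_of_eq_add_csum hup fun l => by
      simp only [csum_sub, Pi.sub_apply, Pi.mul_apply]; linear_combination h3aP l - h1aP l
  have hQ : Qhat - Q = Hmat up *ᵥ (b * (vhat - v) - x * f) :=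
    eq_Hmat_mulVec_of_eq_add_csum hup fun l => by
      simp only [csum_sub, Pi.sub_apply, Pi.mul_apply]; linear_combination h3aQ l - h1aQ l
  ext l
  have hvl := elim_sub_elim_eq_transpose_mulVec (up := up) v₀ vhat v l
  have hPl := congrFun hP l
  have hQl := congrFun hQ l
  simp only [mulVec_sub, Pi.sub_apply] at hPl hQl
  simp only [Amat, M1, M2, add_mulVec, sub_mulVec, one_mulVec, smul_mulVec, ← mulVec_mulVec,
    diagonal_mulVec_eq_mul, Pi.add_apply, Pi.sub_apply, Pi.smul_apply, Pi.mul_apply, Pi.pow_apply,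
    smul_eq_mul]
  linear_combination h3b l - h1b l + hvl - 2 * r l * hPl - 2 * x l * hQl

theorem voltage_le_lossless_voltage (hup : ∀ l k, up l = some k → (k : ℕ) < (l : ℕ))
    {v₀ : ℝ} (h8a : IsUnit (Amat up r x g b)) (h8b : ∀ k l, 0 ≤ Dmat up r x g b k l)
    (hf : ∀ l, 0 ≤ f l)
    (h1aP : ∀ l, P l = p l + g l * v l + r l * f l + csum up P l)
    (h1aQ : ∀ l, Q l = q l + b l * v l + x l * f l + csum up Q l)
    (h1b : ∀ l, v l = (up l).elim v₀ v - 2 * (r l * P l + x l * Q l)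
        + ((r l) ^ 2 + (x l) ^ 2) * f l)
    {Phat Qhat vhat : Fin n → ℝ}
    (h3aP : ∀ l, Phat l = p l + g l * vhat l + csum up Phat l)
    (h3aQ : ∀ l, Qhat l = q l + b l * vhat l + csum up Qhat l)
    (h3b : ∀ l, vhat l = (up l).elim v₀ vhat - 2 * (r l * Phat l + x l * Qhat l))
    (l : Fin n) : v l ≤ vhat l := by
  have hgap : vhat - v = Dmat up r x g b *ᵥ f := by
    rw [Dmat_mulVec, ← Amat_mulVec_voltage_gap hup h1aP h1aQ h1b h3aP h3aQ h3b, mulVec_mulVec,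
      Cmat, nonsing_inv_mul _ ((isUnit_iff_isUnit_det _).mp h8a), one_mulVec]
  have hDf : 0 ≤ ∑ m, Dmat up r x g b l m * f m :=
    sum_nonneg fun m _ => mul_nonneg (h8b l m) (hf m)
  have hl := congrFun hgap l
  rw [Pi.sub_apply] at hl
  exact sub_nonneg.mp (hl ▸ hDf)

end DistFlow

theorem stmt12_general (n : ℕ) (up : Fin n → Option (Fin n))
    (hup : ∀ l k, up l = some k → (k : ℕ) < (l : ℕ))
    (r x g b : Fin n → ℝ)
    (hr : ∀ l, 0 ≤ r l) (hx : ∀ l, 0 ≤ x l)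
    (p q : Fin n → ℝ) (v₀ : ℝ)
    (vmin vmax Imax : Fin n → ℝ)
    (h8a : IsUnit (Amat up r x g b))
    (h8b : ∀ k l, 0 ≤ Dmat up r x g b k l)
    (P Q v f : Fin n → ℝ) (hv : ∀ l, 0 < v l)
    -- exact DistFlow equations (1.a)–(1.c)
    (h1aP : ∀ l, P l = p l + g l * v l + r l * f l + csum up P l)
    (h1aQ : ∀ l, Q l = q l + b l * v l + x l * f l + csum up Q l)
    (h1b : ∀ l, v l = (up l).elim v₀ v - 2 * (r l * P l + x l * Q l)
        + ((r l) ^ 2 + (x l) ^ 2) * f l)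
    (h1c : ∀ l, f l * v l = (P l - r l * f l) ^ 2 + (Q l - x l * f l) ^ 2)
    (Phat Qhat vhat Pl Ql Pb Qb fb : Fin n → ℝ)
    -- lossless equations (3.a)–(3.b)
    (h3aP : ∀ l, Phat l = p l + g l * vhat l + csum up Phat l)
    (h3aQ : ∀ l, Qhat l = q l + b l * vhat l + csum up Qhat l)
    (h3b : ∀ l, vhat l = (up l).elim v₀ vhat - 2 * (r l * Phat l + x l * Qhat l))
    -- bound equations (3.c)–(3.e)
    (h3cP : ∀ l, Pl l = p l + g l * v l + csum up Pl l)
    (h3cQ : ∀ l, Ql l = q l + b l * v l + csum up Ql l)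
    (h3dP : ∀ l, Pb l = p l + g l * v l + r l * fb l + csum up Pb l)
    (h3dQ : ∀ l, Qb l = q l + b l * v l + x l * fb l + csum up Qb l)
    (h3e : ∀ l, max ((Pb l - r l * fb l) ^ 2) ((Pl l) ^ 2)
        + max ((Qb l - x l * fb l) ^ 2) ((Ql l) ^ 2) ≤ fb l * v l)
    -- conservative security bounds
    (hsec1 : ∀ l, vmin l ≤ v l) (hsec2 : ∀ l, vhat l ≤ vmax l)
    (hsec3 : ∀ l, fb l ≤ Imax l) :
    ∀ l, vmin l ≤ v l ∧ v l ≤ vmax l ∧ f l ≤ Imax l := by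
  have hf : ∀ l, 0 ≤ f l := fun l =>
    nonneg_of_mul_nonneg_left (h1c l ▸ by positivity) (hv l)
  intro l
  exact ⟨hsec1 l,
    (voltage_le_lossless_voltage hup h8a h8b hf h1aP h1aQ h1b h3aP h3aQ h3b l).trans (hsec2 l),
    (current_le_bound hup hr hx hv hf h1aP h1aQ h1c h3cP h3cQ h3dP h3dQ h3e l).trans (hsec3 l)⟩

/-- Lemma II.  Under conditions (8.a)–(8.b), any exact DistFlow solution
accompanied by MAR-OPF auxiliary variables that satisfy the conservative security bounds
also satisfies the original security constraints. -/
theorem stmt12 (n : ℕ) (up : Fin n → Option (Fin n))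
    (hup : ∀ l k, up l = some k → (k : ℕ) < (l : ℕ))
    (r x g b : Fin n → ℝ)
    (hr : ∀ l, 0 ≤ r l) (hx : ∀ l, 0 ≤ x l) (hg : ∀ l, 0 ≤ g l) (hb : ∀ l, 0 ≤ b l)
    (p q : Fin n → ℝ) (v₀ : ℝ) (hv₀ : 0 < v₀)
    (vmin vmax Imax : Fin n → ℝ)
    (h8a : IsUnit (Amat up r x g b))
    (h8b : ∀ k l, 0 ≤ Dmat up r x g b k l)
    (P Q v f : Fin n → ℝ) (hv : ∀ l, 0 < v l)
    -- exact DistFlow equations (1.a)–(1.c)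
    (h1aP : ∀ l, P l = p l + g l * v l + r l * f l + csum up P l)
    (h1aQ : ∀ l, Q l = q l + b l * v l + x l * f l + csum up Q l)
    (h1b : ∀ l, v l = (up l).elim v₀ v - 2 * (r l * P l + x l * Q l)
        + ((r l) ^ 2 + (x l) ^ 2) * f l)
    (h1c : ∀ l, f l * v l = (P l - r l * f l) ^ 2 + (Q l - x l * f l) ^ 2)
    (Phat Qhat vhat Pl Ql Pb Qb fb : Fin n → ℝ)
    -- lossless equations (3.a)–(3.b)
    (h3aP : ∀ l, Phat l = p l + g l * vhat l + csum up Phat l)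
    (h3aQ : ∀ l, Qhat l = q l + b l * vhat l + csum up Qhat l)
    (h3b : ∀ l, vhat l = (up l).elim v₀ vhat - 2 * (r l * Phat l + x l * Qhat l))
    -- bound equations (3.c)–(3.e)
    (h3cP : ∀ l, Pl l = p l + g l * v l + csum up Pl l)
    (h3cQ : ∀ l, Ql l = q l + b l * v l + csum up Ql l)
    (h3dP : ∀ l, Pb l = p l + g l * v l + r l * fb l + csum up Pb l)
    (h3dQ : ∀ l, Qb l = q l + b l * v l + x l * fb l + csum up Qb l)
    (h3e : ∀ l, max ((Pb l - r l * fb l) ^ 2) ((Pl l) ^ 2)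
        + max ((Qb l - x l * fb l) ^ 2) ((Ql l) ^ 2) ≤ fb l * v l)
    -- conservative security bounds
    (hsec1 : ∀ l, vmin l ≤ v l) (hsec2 : ∀ l, vhat l ≤ vmax l)
    (hsec3 : ∀ l, fb l ≤ Imax l) :
    ∀ l, vmin l ≤ v l ∧ v l ≤ vmax l ∧ f l ≤ Imax l :=
  stmt12_general n up hup r x g b hr hx p q v₀ vmin vmax Imax h8a h8b P Q v f hv h1aP h1aQ h1b h1c
    Phat Qhat vhat Pl Ql Pb Qb fb h3aP h3aQ h3b h3cP h3cQ h3dP h3dQ h3e hsec1 hsec2 hsec3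
end
end

section
/- Assume the radial network encoding with H := (1 − G)⁻¹, and let p, g, v, r, f, P : Fin n → ℝ. Then the per-line power-balance equations P l = p l + g l * v l + r l * f l + ∑_{m ∈ children l} P m hold for every l : Fin n if and only if P = H.mulVec p + (H·diag(g)).mulVec v + (H·diag(r)).mulVec f (equation (13) of the paper). -/
/-!
The balance equations say `(1 - G) P = p + diag(g) v + diag(r) f`. Parents carry smaller
indices than their children, so `G` is strictly upper triangular, `det (1 - G) = 1`, and
the system is solved by applying `H = (1 - G)⁻¹`.
-/

open Matrix

noncomputable section

namespace Matrix

theorem mulVec_eq_iff_eq_nonsing_inv_mulVec {ι R : Type*} [Fintype ι] [DecidableEq ι]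
    [CommRing R] {A : Matrix ι ι R} (hA : IsUnit A.det) {x y : ι → R} :
    A *ᵥ x = y ↔ x = A⁻¹ *ᵥ y := by
  constructor
  · rintro rfl
    rw [mulVec_mulVec, nonsing_inv_mul A hA, one_mulVec]
  · rintro rfl
    rw [mulVec_mulVec, mul_nonsing_inv A hA, one_mulVec]

end Matrix

section RadialNetwork

variable {n : ℕ} {up : Fin n → Option (Fin n)}

theorem Gmat_mulVec (P : Fin n → ℝ) : Gmat up *ᵥ P = csum up P := by
  funext l
  simp only [csum, Gmat, mulVec, dotProduct, of_apply, ite_mul, one_mul, zero_mul,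
    Finset.sum_filter]

theorem Gmat_apply_eq_zero_of_le (hup : ∀ l k, up l = some k → (k : ℕ) < (l : ℕ))
    {k l : Fin n} (hlk : l ≤ k) : Gmat up k l = 0 :=
  if_neg fun h => (hup l k h).not_ge hlk

theorem isUpperTriangular_one_sub_Gmat (hup : ∀ l k, up l = some k → (k : ℕ) < (l : ℕ)) :
    (1 - Gmat up).IsUpperTriangular := by
  intro k l (hlk : l < k)
  rw [Matrix.sub_apply, one_apply_ne hlk.ne', Gmat_apply_eq_zero_of_le hup hlk.le, sub_zero]

theorem det_one_sub_Gmat (hup : ∀ l k, up l = some k → (k : ℕ) < (l : ℕ)) :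
    (1 - Gmat up).det = 1 := by
  rw [det_of_isUpperTriangular (isUpperTriangular_one_sub_Gmat hup)]
  refine Finset.prod_eq_one fun l _ => ?_
  rw [Matrix.sub_apply, one_apply_eq, Gmat_apply_eq_zero_of_le hup le_rfl, sub_zero]

theorem forall_eq_add_csum_iff (q P : Fin n → ℝ) :
    (∀ l, P l = q l + csum up P l) ↔ (1 - Gmat up) *ᵥ P = q := by
  rw [sub_mulVec, one_mulVec, Gmat_mulVec, funext_iff]
  exact forall_congr' fun l => sub_eq_iff_eq_add.symm

end RadialNetwork

/-- equation (13) of the paper: the per-line power-balance recursions hold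
iff `P = H p + H diag(g) v + H diag(r) f`. -/
theorem stmt15 (n : ℕ) (up : Fin n → Option (Fin n))
    (hup : ∀ l k, up l = some k → (k : ℕ) < (l : ℕ))
    (p g v r f P : Fin n → ℝ) :
    (∀ l, P l = p l + g l * v l + r l * f l + csum up P l) ↔
      P = (Hmat up).mulVec p + (Hmat up * diagonal g).mulVec v
        + (Hmat up * diagonal r).mulVec f := by
  have hq : (fun l => p l + g l * v l + r l * f l) = p + diagonal g *ᵥ v + diagonal r *ᵥ f := by
    funext l
    simp only [Pi.add_apply, mulVec_diagonal]
  have hunit : IsUnit (1 - Gmat up).det := by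
    rw [det_one_sub_Gmat hup]
    exact isUnit_one
  rw [forall_eq_add_csum_iff (fun l => p l + g l * v l + r l * f l), hq,
    mulVec_eq_iff_eq_nonsing_inv_mulVec hunit, mulVec_add, mulVec_add, mulVec_mulVec,
    mulVec_mulVec, Hmat]
end
end
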